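/- arXiv:hep-th/9502053 — 5 statements merged into one kernel-verified Lean document; each statement's English description precedes it below -/
import Mathlib

section
/- The diagonal reflection matrices K±(z) = diag(z^{∓1}, z^{±1}) satisfy the reflection equation R¹²(x/y) K¹₋(x) R¹²(xy) K²₋(y) = K²₋(y) R¹²(xy) K¹₋(x) R¹²(x/y) on ℂ²⊗ℂ², where the six-vertex R-matrix is as above, K¹ = K⊗I, K² = I⊗K. -/
open Matrix

noncomputable def sva (q z : ℂ) : ℂ := z * q - z⁻¹ * q⁻¹
noncomputable def svb (z : ℂ) : ℂ := z - z⁻¹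
noncomputable def svc (q : ℂ) : ℂ := q - q⁻¹

/-- The six-vertex `R`-matrix on `ℂ² ⊗ ℂ²`. -/
noncomputable def R6v (q z : ℂ) : Matrix (Fin 2 × Fin 2) (Fin 2 × Fin 2) ℂ :=
  fun p p' =>
    if p = p' then (if p.1 = p.2 then sva q z else svb z)
    else if p.1 = p'.2 ∧ p.2 = p'.1 ∧ p.1 ≠ p.2 then svc q else 0

/-- The diagonal reflection matrix `K₋(z) = diag(z, z⁻¹)`. -/
noncomputable def Kminus (z : ℂ) : Matrix (Fin 2) (Fin 2) ℂ :=
  Matrix.diagonal (fun i => if i = 0 then z else z⁻¹)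

/-- `K ⊗ I` acting on the first factor. -/
noncomputable def K1 (z : ℂ) : Matrix (Fin 2 × Fin 2) (Fin 2 × Fin 2) ℂ :=
  fun p p' => Kminus z p.1 p'.1 * (if p.2 = p'.2 then 1 else 0)

/-- `I ⊗ K` acting on the second factor. -/
noncomputable def K2 (z : ℂ) : Matrix (Fin 2 × Fin 2) (Fin 2 × Fin 2) ℂ :=
  fun p p' => Kminus z p.2 p'.2 * (if p.1 = p'.1 then 1 else 0)

noncomputable def RAq (a b c : ℂ) : Matrix (Fin 2 × Fin 2) (Fin 2 × Fin 2) ℂ :=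
  fun p p' =>
    if p = p' then (if p.1 = p.2 then a else b)
    else if p.1 = p'.2 ∧ p.2 = p'.1 ∧ p.1 ≠ p.2 then c else 0

lemma R6v_eq_smul (q x y : ℂ) (hq : q ≠ 0) (hx : x ≠ 0) (hy : y ≠ 0) :
    R6v q (x / y) = (x⁻¹ * y⁻¹ * q⁻¹) •
      RAq (x^2*q^2 - y^2) (q*(x^2 - y^2)) (x*y*(q^2 - 1)) := by
  funext p p'
  simp only [R6v, RAq, Matrix.smul_apply, smul_eq_mul, sva, svb, svc]
  split_ifs <;> first
    | rfl
    | (field_simp; try ring)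

lemma R6v_eq_smul' (q x y : ℂ) (hq : q ≠ 0) (hx : x ≠ 0) (hy : y ≠ 0) :
    R6v q (x * y) = (x⁻¹ * y⁻¹ * q⁻¹) •
      RAq (x^2*y^2*q^2 - 1) (q*(x^2*y^2 - 1)) (x*y*(q^2 - 1)) := by
  funext p p'
  simp only [R6v, RAq, Matrix.smul_apply, smul_eq_mul, sva, svb, svc]
  split_ifs <;> first
    | rfl
    | (field_simp; try ring)

noncomputable def K1p (x : ℂ) : Matrix (Fin 2 × Fin 2) (Fin 2 × Fin 2) ℂ :=
  fun p p' => (if p.1 = 0 then x^2 else 1) * (if p = p' then 1 else 0)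

noncomputable def K2p (y : ℂ) : Matrix (Fin 2 × Fin 2) (Fin 2 × Fin 2) ℂ :=
  fun p p' => (if p.2 = 0 then y^2 else 1) * (if p = p' then 1 else 0)

lemma K1_eq_smul (x : ℂ) (hx : x ≠ 0) : K1 x = x⁻¹ • K1p x := by
  funext p p'
  obtain ⟨i, j⟩ := p; obtain ⟨k, l⟩ := p'
  simp only [K1, K1p, Kminus, Matrix.diagonal_apply, Matrix.smul_apply, smul_eq_mul,
    Prod.mk.injEq]
  fin_cases i <;> fin_cases k <;> by_cases h : j = l <;>
    simp [h] <;> field_simp <;> try ring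

lemma K2_eq_smul (y : ℂ) (hy : y ≠ 0) : K2 y = y⁻¹ • K2p y := by
  funext p p'
  obtain ⟨i, j⟩ := p; obtain ⟨k, l⟩ := p'
  simp only [K2, K2p, Kminus, Matrix.diagonal_apply, Matrix.smul_apply, smul_eq_mul,
    Prod.mk.injEq]
  fin_cases j <;> fin_cases l <;> by_cases h : i = k <;>
    simp [h] <;> field_simp <;> try ring

set_option maxHeartbeats 4000000 in
lemma poly_reflection (q x y : ℂ) :
    RAq (x^2*q^2 - y^2) (q*(x^2 - y^2)) (x*y*(q^2 - 1)) * K1p x *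
      RAq (x^2*y^2*q^2 - 1) (q*(x^2*y^2 - 1)) (x*y*(q^2 - 1)) * K2p y =
    K2p y * RAq (x^2*y^2*q^2 - 1) (q*(x^2*y^2 - 1)) (x*y*(q^2 - 1)) * K1p x *
      RAq (x^2*q^2 - y^2) (q*(x^2 - y^2)) (x*y*(q^2 - 1)) := by
  ext ⟨i, j⟩ ⟨k, l⟩
  fin_cases i <;> fin_cases j <;> fin_cases k <;> fin_cases l <;>
  · simp only [Matrix.mul_apply, Fintype.sum_prod_type, Fin.sum_univ_two,
      RAq, K1p, K2p, Prod.mk.injEq]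
    norm_num
    try ring

theorem sixVertex_reflection (q x y : ℂ) (hq : q ≠ 0) (hx : x ≠ 0) (hy : y ≠ 0) :
    R6v q (x / y) * K1 x * R6v q (x * y) * K2 y =
      K2 y * R6v q (x * y) * K1 x * R6v q (x / y) := by
  rw [R6v_eq_smul q x y hq hx hy, R6v_eq_smul' q x y hq hx hy,
    K1_eq_smul x hx, K2_eq_smul y hy]
  simp only [Matrix.smul_mul, Matrix.mul_smul, smul_smul]
  rw [poly_reflection q x y]
  ring_nf
end

section
/- Suppose a sequence (T_q)_{q≥0} of functions satisfies T_0 = 1 and the fusion hierarchy T_q(u)·T_1(u+qλ) = T_{q+1}(u) + f(u+(q-1)λ)·T_{q-1}(u) for all q ≥ 1 and all u. Define t_q(u) = T_{q+1}(u)·T_{q-1}(u+λ) / ∏_{k=0}^{q-1} f(u+kλ) for q ≥ 1 and t_0 = 0, assuming ∏_{k=0}^{q-1} f(u+kλ) ≠ 0. Then the TBA relations hold: t_q(u)·t_q(u+λ) = (1 + t_{q+1}(u))·(1 + t_{q-1}(u+λ)) for all q ≥ 1. -/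
/-!
Writing `P q u = ∏_{k<q} f (u + kλ)`, the fusion hierarchy implies the bilinear T-system
`T_{q+1}(u) T_{q+1}(u+λ) = T_{q+2}(u) T_q(u+λ) + P_{q+1}(u)`, so that
`1 + t_q(u) = T_q(u) T_q(u+λ) / P_q(u)` for every `q`, including `q = 0` thanks to `T_0 = 1`.
Substituting this on the right of the TBA relation, it reduces to
`P_{q+1}(u) P_{q+1}(u+λ) = P_{q+2}(u) P_q(u+λ)`, which holds since `P_{n+1}(u) = f(u) P_n(u+λ)`.
-/

open Finset

section CommRing

variable {R : Type*} [CommRing R] {lam : R} {f : R → R} {T : ℕ → R → R}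

theorem prod_range_succ_shift (n : ℕ) (u : R) :
    ∏ k ∈ range (n + 1), f (u + k * lam) = f u * ∏ k ∈ range n, f (u + lam + k * lam) := by
  rw [prod_range_succ', mul_comm]
  congr 1
  · simp
  · refine prod_congr rfl fun k _ => ?_
    push_cast
    ring_nf

theorem tSystem_of_fusion (hT0 : ∀ u, T 0 u = 1)
    (hfus : ∀ q : ℕ, ∀ u, T (q + 1) u * T 1 (u + (q + 1) * lam) =
      T (q + 2) u + f (u + q * lam) * T q u) (q : ℕ) (u : R) :
    T (q + 1) u * T (q + 1) (u + lam) =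
      T (q + 2) u * T q (u + lam) + ∏ k ∈ range (q + 1), f (u + k * lam) := by
  induction q generalizing u with
  | zero =>
    have h := hfus 0 u
    simp only [Nat.cast_zero, zero_add, one_mul, zero_mul, add_zero, hT0, mul_one] at h
    simp [hT0, h]
  | succ p ih =>
    have h₁ := hfus (p + 1) u
    have h₂ := hfus p (u + lam)
    rw [prod_range_succ]
    push_cast at h₁ h₂ ⊢
    rw [show u + lam + (p + 1) * lam = u + (p + 1 + 1) * lam by ring,
      show u + lam + p * lam = u + (p + 1) * lam by ring] at h₂
    linear_combination T (p + 1) (u + lam) * h₁ - T (p + 2) u * h₂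
      + f (u + (p + 1) * lam) * ih u

end CommRing

section Field

variable {K : Type*} [Field K] {lam : K} {f : K → K} {T t : ℕ → K → K}

theorem one_add_eq_of_fusion (hf : ∀ u, f u ≠ 0) (hT0 : ∀ u, T 0 u = 1)
    (hfus : ∀ q : ℕ, ∀ u, T (q + 1) u * T 1 (u + (q + 1) * lam) =
      T (q + 2) u + f (u + q * lam) * T q u)
    (ht0 : ∀ u, t 0 u = 0)
    (ht : ∀ q : ℕ, ∀ u, t (q + 1) u =
      T (q + 2) u * T q (u + lam) / ∏ k ∈ range (q + 1), f (u + k * lam))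
    (q : ℕ) (u : K) :
    1 + t q u = T q u * T q (u + lam) / ∏ k ∈ range q, f (u + k * lam) := by
  cases q with
  | zero => simp [hT0, ht0]
  | succ q =>
    have hP : ∏ k ∈ range (q + 1), f (u + k * lam) ≠ 0 := prod_ne_zero_iff.mpr fun _ _ => hf _
    rw [ht, tSystem_of_fusion hT0 hfus, add_div, div_self hP, add_comm]

end Field

theorem fusion_TBA (lam : ℂ) (f : ℂ → ℂ) (hf : ∀ u, f u ≠ 0)
    (T : ℕ → ℂ → ℂ) (t : ℕ → ℂ → ℂ)
    (hT0 : ∀ u, T 0 u = 1)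
    (hfus : ∀ q : ℕ, ∀ u, T (q + 1) u * T 1 (u + (q + 1) * lam) =
      T (q + 2) u + f (u + q * lam) * T q u)
    (ht0 : ∀ u, t 0 u = 0)
    (ht : ∀ q : ℕ, ∀ u, t (q + 1) u =
      T (q + 2) u * T q (u + lam) / ∏ k ∈ range (q + 1), f (u + k * lam)) :
    ∀ q : ℕ, ∀ u, t (q + 1) u * t (q + 1) (u + lam) =
      (1 + t (q + 2) u) * (1 + t q (u + lam)) := by
  intro q u
  have hP : ∀ n v, ∏ k ∈ range n, f (v + k * lam) ≠ 0 :=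
    fun _ _ => prod_ne_zero_iff.mpr fun _ _ => hf _
  rw [ht, ht, one_add_eq_of_fusion hf hT0 hfus ht0 ht, one_add_eq_of_fusion hf hT0 hfus ht0 ht,
    prod_range_succ_shift (q + 1) u, prod_range_succ_shift q u]
  field_simp [hf u, hP q (u + lam), hP (q + 1) (u + lam)]
end

section
/- Suppose a sequence (T_q)_{q≥0} satisfies T_0 = 1 and the fusion hierarchy T_q(u)·T_1(u+qλ) = T_{q+1}(u) + f(u+(q-1)λ)·T_{q-1}(u). Then for every q ≥ 1, T_q(u)·T_q(u+λ) = ∏_{k=0}^{q-1} f(u+kλ) + T_{q+1}(u)·T_{q-1}(u+λ). -/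
open Finset

theorem fusion_inversion (lam : ℂ) (f : ℂ → ℂ) (T : ℕ → ℂ → ℂ)
    (hT0 : ∀ u, T 0 u = 1)
    (hfus : ∀ q : ℕ, ∀ u, T (q + 1) u * T 1 (u + (q + 1) * lam) =
      T (q + 2) u + f (u + q * lam) * T q u) :
    ∀ q : ℕ, ∀ u, T (q + 1) u * T (q + 1) (u + lam) =
      (∏ k ∈ range (q + 1), f (u + k * lam)) + T (q + 2) u * T q (u + lam) := by
  intro q
  induction q with
  | zero =>
    intro u
    have h := hfus 0 u
    simp only [hT0, prod_range_one, Nat.cast_zero, Nat.cast_one] at h ⊢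
    push_cast at h ⊢
    rw [show u + (0 + 1) * lam = u + lam from by ring,
        show u + 0 * lam = u from by ring] at h
    rw [prod_range_one, show u + (0:ℕ) * lam = u from by push_cast; ring]
    linear_combination h
  | succ q ih =>
    intro u
    have h1 := hfus q (u + lam)
    have h2 := hfus (q + 1) u
    have h3 := ih u
    rw [prod_range_succ]
    push_cast at h1 h2 h3 ⊢
    rw [show u + lam + (↑q + 1) * lam = u + (↑q + 1 + 1) * lam from by ring,
        show u + lam + ↑q * lam = u + (↑q + 1) * lam from by ring] at h1
    linear_combination (-(T (q + 2) u)) * h1 + T (q + 1) (u + lam) * h2 +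
      f (u + (↑q + 1) * lam) * h3
end

section
/- Let x_q satisfy the recursion x_q² = (1 + x_{q-1})(1 + x_{q+1}) for q ≥ 1 with x_0 = 0 and x_1 = sin(3θ)/sin(θ) where sin θ ≠ 0 and 1 + x_q ≠ 0 for all q. Then x_q = sin(qθ)·sin((q+2)θ)/sin²θ for all q ≥ 0. -/
/-! The recursion determines `x (q + 2)` from `x q` and `x (q + 1)` as long as `1 + x q ≠ 0`, so
it suffices to check that `f q = sin (q θ) sin ((q + 2) θ) / sin² θ` solves it with the same
initial values. This follows from `sin (s - θ) sin (s + θ) = sin² s - sin² θ`, which gives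
`1 + f q = sin² ((q + 1) θ) / sin² θ`, turning the recursion into an identity of squares. -/

theorem eq_of_sq_eq_one_add_mul_one_add {R : Type*} [CommRing R] [IsDomain R] {x y : ℕ → R}
    (hx : ∀ q, x (q + 1) ^ 2 = (1 + x q) * (1 + x (q + 2)))
    (hy : ∀ q, y (q + 1) ^ 2 = (1 + y q) * (1 + y (q + 2)))
    (hne : ∀ q, 1 + x q ≠ 0) (h0 : x 0 = y 0) (h1 : x 1 = y 1) : x = y := by
  have step : ∀ q, x q = y q ∧ x (q + 1) = y (q + 1) := by
    intro q
    induction q with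
    | zero => exact ⟨h0, h1⟩
    | succ q ih =>
      have h : (1 + x q) * (1 + x (q + 2)) = (1 + x q) * (1 + y (q + 2)) := by
        rw [← hx, ih.2, hy, ih.1]
      exact ⟨ih.2, add_left_cancel (mul_left_cancel₀ (hne q) h)⟩
  exact funext fun q => (step q).1

namespace Complex

theorem sin_sub_mul_sin_add (s θ : ℂ) : sin (s - θ) * sin (s + θ) = sin s ^ 2 - sin θ ^ 2 := by
  rw [sin_add, sin_sub]
  linear_combination sin s ^ 2 * sin_sq_add_cos_sq θ - sin θ ^ 2 * sin_sq_add_cos_sq s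

theorem one_add_sin_mul_sin_div_sin_sq {θ : ℂ} (hθ : sin θ ≠ 0) (t : ℂ) :
    1 + sin (t * θ) * sin ((t + 2) * θ) / sin θ ^ 2 = sin ((t + 1) * θ) ^ 2 / sin θ ^ 2 := by
  have h := sin_sub_mul_sin_add ((t + 1) * θ) θ
  rw [show (t + 1) * θ - θ = t * θ by ring, show (t + 1) * θ + θ = (t + 2) * θ by ring] at h
  rw [eq_div_iff (pow_ne_zero 2 hθ), add_mul, div_mul_cancel₀ _ (pow_ne_zero 2 hθ)]
  linear_combination h

theorem sin_mul_sin_div_sin_sq_recursion {θ : ℂ} (hθ : sin θ ≠ 0) (q : ℕ) :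
    let f : ℕ → ℂ := fun q => sin (q * θ) * sin ((q + 2) * θ) / sin θ ^ 2
    f (q + 1) ^ 2 = (1 + f q) * (1 + f (q + 2)) := by
  intro f
  simp only [f, one_add_sin_mul_sin_div_sin_sq hθ]
  push_cast
  ring_nf

end Complex

theorem constant_TBA_uniqueness (θ : ℂ) (hθ : Complex.sin θ ≠ 0)
    (x : ℕ → ℂ)
    (hx0 : x 0 = 0)
    (hx1 : x 1 = Complex.sin (3 * θ) / Complex.sin θ)
    (hrec : ∀ q : ℕ, x (q + 1) ^ 2 = (1 + x q) * (1 + x (q + 2)))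
    (hne : ∀ q : ℕ, 1 + x q ≠ 0) :
    ∀ q : ℕ, x q = Complex.sin (q * θ) * Complex.sin ((q + 2) * θ) /
      Complex.sin θ ^ 2 := by
  refine congrFun (eq_of_sq_eq_one_add_mul_one_add hrec
    (Complex.sin_mul_sin_div_sin_sq_recursion hθ) hne ?_ ?_)
  · simp [hx0]
  · rw [hx1]
    push_cast
    rw [one_mul, show ((1 : ℂ) + 2) * θ = 3 * θ by ring]
    field_simp
end

section
/- For nonzero complex z and q, the eigenvalue relation holds: if T(u)Q(u) = ω₁(u)φ(u+λ/2)Q(u−λ) + ω₂(u)φ(u−λ/2)Q(u+λ) with Q(u) = ∏_{m=1}^{M} sin(u−v_m), φ(u) = sin^N(u), then T is regular (finite) at u = v_k for each k if and only if the Bethe ansatz equations sin^N(v_k+λ/2)/sin^N(v_k−λ/2) = ω₂(v_k)/ω₁(v_k) · ∏_{l≠k} sin(v_k−v_l+λ)/sin(v_k−v_l−λ) hold, provided the v_m are distinct modulo π and no v_k ± v_l or v_k ∓ λ creates additional coincident zeros. -/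
open Finset

theorem regularity_iff_BAE (lam : ℂ) (N M : ℕ) (hN : 0 < N) (hM : 0 < M)
    (v : Fin M → ℂ) (ω₁ ω₂ : ℂ → ℂ)
    -- the `v_m` are pairwise distinct modulo π
    (hdist : ∀ k l, k ≠ l → ∀ n : ℤ, v k - v l ≠ n * Real.pi)
    -- no additional coincident zeros: `v_k ± λ ≢ v_l (mod π)` for `k ≠ l`
    (hshiftp : ∀ k l, k ≠ l → ∀ n : ℤ, v k + lam - v l ≠ n * Real.pi)
    (hshiftm : ∀ k l, k ≠ l → ∀ n : ℤ, v k - lam - v l ≠ n * Real.pi)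
    (hlam : Complex.sin lam ≠ 0)
    (hω₁ : ∀ k, ω₁ (v k) ≠ 0) (hω₂ : ∀ k, ω₂ (v k) ≠ 0)
    (hφ : ∀ k, Complex.sin (v k - lam / 2) ≠ 0)
    (Q : ℂ → ℂ) (hQ : ∀ u, Q u = ∏ m, Complex.sin (u - v m))
    (φ : ℂ → ℂ) (hφdef : ∀ u, φ u = Complex.sin u ^ N) (k : Fin M) :
    -- `T` is regular (finite) at `u = v_k`, i.e. the numerator of `T` vanishes there,
    ω₁ (v k) * φ (v k + lam / 2) * Q (v k - lam) +
        ω₂ (v k) * φ (v k - lam / 2) * Q (v k + lam) = 0 ↔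
    -- if and only if the Bethe ansatz equation holds at `v_k`.
    Complex.sin (v k + lam / 2) ^ N / Complex.sin (v k - lam / 2) ^ N =
      ω₂ (v k) / ω₁ (v k) *
        ∏ l ∈ univ.erase k,
          Complex.sin (v k - v l + lam) / Complex.sin (v k - v l - lam) := by
  have hω1 := hω₁ k
  have hSm := hφ k
  have hSmN : Complex.sin (v k - lam / 2) ^ N ≠ 0 := pow_ne_zero _ hSm
  have hPmne : ∀ l ∈ univ.erase k, Complex.sin (v k - v l - lam) ≠ 0 := by
    intro l hl
    rw [Finset.mem_erase] at hl
    intro h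
    rw [Complex.sin_eq_zero_iff] at h
    obtain ⟨n, hn⟩ := h
    exact hshiftm k l hl.1.symm n (by linear_combination hn)
  have hPpne : ∀ l ∈ univ.erase k, Complex.sin (v k - v l + lam) ≠ 0 := by
    intro l hl
    rw [Finset.mem_erase] at hl
    intro h
    rw [Complex.sin_eq_zero_iff] at h
    obtain ⟨n, hn⟩ := h
    exact hshiftp k l hl.1.symm n (by linear_combination hn)
  have hPm : (∏ l ∈ univ.erase k, Complex.sin (v k - v l - lam)) ≠ 0 :=
    Finset.prod_ne_zero_iff.mpr hPmne
  have hPp : (∏ l ∈ univ.erase k, Complex.sin (v k - v l + lam)) ≠ 0 :=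
    Finset.prod_ne_zero_iff.mpr hPpne
  rw [hQ, hQ, hφdef, hφdef,
    ← Finset.mul_prod_erase univ (fun m => Complex.sin (v k - lam - v m)) (Finset.mem_univ k),
    ← Finset.mul_prod_erase univ (fun m => Complex.sin (v k + lam - v m)) (Finset.mem_univ k)]
  have e1 : v k - lam - v k = -lam := by ring
  have e2 : v k + lam - v k = lam := by ring
  rw [e1, e2, Complex.sin_neg]
  have hre1 : (∏ l ∈ univ.erase k, Complex.sin (v k - lam - v l)) =
      ∏ l ∈ univ.erase k, Complex.sin (v k - v l - lam) :=
    Finset.prod_congr rfl (fun l _ => by congr 1; ring)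
  have hre2 : (∏ l ∈ univ.erase k, Complex.sin (v k + lam - v l)) =
      ∏ l ∈ univ.erase k, Complex.sin (v k - v l + lam) :=
    Finset.prod_congr rfl (fun l _ => by congr 1; ring)
  rw [hre1, hre2, Finset.prod_div_distrib]
  set Pminus := ∏ l ∈ univ.erase k, Complex.sin (v k - v l - lam)
  set Pplus := ∏ l ∈ univ.erase k, Complex.sin (v k - v l + lam)
  constructor
  · intro h
    have key : Complex.sin lam * (ω₂ (v k) * Complex.sin (v k - lam / 2) ^ N * Pplus) =
        Complex.sin lam * (ω₁ (v k) * Complex.sin (v k + lam / 2) ^ N * Pminus) := by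
      linear_combination h
    have key2 := mul_left_cancel₀ hlam key
    rw [div_mul_div_comm, div_eq_div_iff hSmN (mul_ne_zero hω1 hPm)]
    linear_combination (-1 : ℂ) * key2
  · intro h
    rw [div_mul_div_comm, div_eq_div_iff hSmN (mul_ne_zero hω1 hPm)] at h
    linear_combination (-1 : ℂ) * Complex.sin lam * h
end
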